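/- arXiv:1610.04690 — 2 statements merged into one kernel-verified Lean document; each statement's English description precedes it below -/
import Mathlib

section
/- In a signed graph Σ, an edge e belongs to some negative cycle if and only if e lies in an unbalanced block of Σ (a maximal 2-connected subgraph containing a negative cycle). -/
open SimpleGraph
variable {V : Type*}

/-- A signed graph `(G, σ)` is balanced: every cycle has sign `+1`. -/
def SBalanced (G : SimpleGraph V) (σ : Sym2 V → ℤˣ) : Prop :=
  ∀ (u : V) (w : G.Walk u u), w.IsCycle → (w.edges.map σ).prod = 1

/-- `B` has no cut vertex. -/
def NoCutVertex (G : SimpleGraph V) (B : G.Subgraph) : Prop :=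
  ∀ v ∈ B.verts, (B.deleteVerts {v}).verts.Nonempty → (B.deleteVerts {v}).Connected

/-- A block: a maximal connected subgraph with no cut vertex. -/
def IsBlock (G : SimpleGraph V) (B : G.Subgraph) : Prop :=
  B.Connected ∧ NoCutVertex G B ∧
    ∀ B' : G.Subgraph, B'.Connected → NoCutVertex G B' → B ≤ B' → B' = B

/-- The subgraph `B` contains a negative cycle. -/
def UnbalancedSub (G : SimpleGraph V) (σ : Sym2 V → ℤˣ) (B : G.Subgraph) : Prop :=
  ∃ (u : V) (w : G.Walk u u), w.IsCycle ∧ (∀ e ∈ w.edges, e ∈ B.edgeSet) ∧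
    (w.edges.map σ).prod = -1

/-!
A negative cycle is connected and has no cut vertex, and by Zorn's lemma every such subgraph
lies in a block.

Conversely, let `C` be a negative cycle in a block `B` and `xy` an edge of `B` not on `C`, with
`x` on `C`. As `x` is not a cut vertex of `B`, some path from `y` reaches `C` avoiding `x`;
preceded by `xy` it is an ear of `C` from `x` to a vertex `b`. The two cycles formed by this ear
and either arc of `C` between `b` and `x` have signs multiplying to `σ(C) = -1`, so one of them
is negative, and it contains `xy`. Applying this along a walk in `B` from `C` to `x` first gives
a negative cycle through `x`.
-/

namespace SimpleGraph

variable {G : SimpleGraph V}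

namespace Walk

lemma IsSubwalk.toSubgraph_le {u v u' v' : V} {p : G.Walk u v} {q : G.Walk u' v'}
    (h : p.IsSubwalk q) : p.toSubgraph ≤ q.toSubgraph := by
  obtain ⟨r, r', rfl⟩ := h
  simp only [toSubgraph_append]
  exact le_sup_of_le_left le_sup_right

lemma exists_append_eq_forall_mem_eq {y c : V} (W : G.Walk y c) {S : Set V} (hc : c ∈ S) :
    ∃ b ∈ S, ∃ (R : G.Walk y b) (R' : G.Walk b c), W = R.append R' ∧
      ∀ v ∈ R.support, v ∈ S → v = b := by
  induction W with
  | nil => exact ⟨_, hc, nil, nil, rfl, by simp⟩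
  | @cons y z c h W ih =>
    by_cases hy : y ∈ S
    · exact ⟨y, hy, nil, cons h W, rfl, by simp⟩
    obtain ⟨b, hb, R, R', rfl, hR⟩ := ih hc
    refine ⟨b, hb, cons h R, R', rfl, ?_⟩
    intro v hv hvS
    rcases List.mem_cons.mp (by simpa using hv) with rfl | hv
    · exact absurd hvS hy
    · exact hR v hv hvS

lemma isCycle_append_of_isPath {x b : V} {P : G.Walk x b} {Q : G.Walk b x}
    (hP : P.IsPath) (hQ : Q.IsPath) (hPQ : ∀ v ∈ P.support.tail, v ∈ Q.support → v = b)
    (hPe : ¬ P.edges ⊆ Q.edges) : (P.append Q).IsCycle := by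
  have hbQ : b ∉ Q.support.tail := by
    have := hQ.support_nodup
    rw [← Q.cons_tail_support] at this
    exact (List.nodup_cons.mp this).1
  refine hP.isCycle_append hQ (List.disjoint_left.mpr fun v hvP hvQ => ?_) ?_
  · exact hbQ (hPQ v hvP (List.mem_of_mem_tail hvQ) ▸ hvQ)
  by_contra! hlen
  cases P with
  | nil => exact hPe (by simp)
  | cons h P' =>
    cases Q with
    | nil => exact ((cons_isPath_iff _ _).mp hP).2 P'.end_mem_support
    | cons h' Q' =>
      simp only [length_cons, add_le_iff_nonpos_left, nonpos_iff_eq_zero,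
        length_eq_zero_iff] at hlen
      obtain ⟨⟨⟩, ⟨⟩⟩ := hlen
      simp [Sym2.eq_swap] at hPe

def sign (σ : Sym2 V → ℤˣ) {u v : V} (p : G.Walk u v) : ℤˣ := (p.edges.map σ).prod

variable (σ : Sym2 V → ℤˣ)

@[simp]
lemma sign_append {u v w : V} (p : G.Walk u v) (q : G.Walk v w) :
    (p.append q).sign σ = p.sign σ * q.sign σ := by
  simp [sign, edges_append]

@[simp]
lemma sign_reverse {u v : V} (p : G.Walk u v) : p.reverse.sign σ = p.sign σ := by
  simp [sign, edges_reverse, List.prod_reverse]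

@[simp]
lemma sign_rotate [DecidableEq V] {u v : V} (c : G.Walk v v) (h : u ∈ c.support) :
    (c.rotate u h).sign σ = c.sign σ :=
  ((c.rotate_edges u h).perm.map σ).prod_eq

lemma IsCycle.exists_sign_append_eq_neg_one {x b : V} {C : G.Walk x x}
    (hC : C.IsCycle) (hneg : C.sign σ = -1) (hb : b ∈ C.support) {P : G.Walk x b}
    (hP : P.IsPath) (hPC : ∀ v ∈ P.support.tail, v ∈ C.support → v = b)
    (hPe : ¬ P.edges ⊆ C.edges) :
    ∃ Q : G.Walk b x, (P.append Q).IsCycle ∧ (P.append Q).sign σ = -1 ∧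
      Q.toSubgraph ≤ C.toSubgraph := by
  classical
  have hxb : x ≠ b := by
    rintro rfl
    exact hPe (by simp [eq_nil_iff_nil.mpr (isPath_iff_nil.mp hP)])
  have hCsplit := C.take_spec hb
  set T := C.takeUntil b hb
  set D := C.dropUntil b hb
  have hT : T.IsPath := hC.isPath_takeUntil hb
  have hD : D.IsPath := (hCsplit ▸ hC).isPath_of_append_right (not_nil_of_ne hxb)
  have hDC : D.toSubgraph ≤ C.toSubgraph := (C.isSubwalk_dropUntil hb).toSubgraph_le
  have hTC : T.reverse.toSubgraph ≤ C.toSubgraph := by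
    rw [toSubgraph_reverse]
    exact (C.isSubwalk_takeUntil hb).toSubgraph_le
  have hcycle : ∀ Q : G.Walk b x, Q.IsPath → Q.toSubgraph ≤ C.toSubgraph →
      (P.append Q).IsCycle := by
    intro Q hQ hQC
    refine isCycle_append_of_isPath hP hQ (fun v hv hvQ => hPC v hv ?_) fun hsub => hPe ?_
    · exact C.mem_verts_toSubgraph.mp (hQC.1 (Q.mem_verts_toSubgraph.mpr hvQ))
    · exact fun e he => C.mem_edges_toSubgraph.mp
        (Subgraph.edgeSet_mono hQC (Q.mem_edges_toSubgraph.mpr (hsub he)))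
  -- Together the two candidate cycles traverse `C` once and `P` twice.
  have hprod : (P.append D).sign σ * (P.append T.reverse).sign σ = -1 := by
    rw [← hneg, ← hCsplit, sign_append, sign_append, sign_reverse, sign_append, mul_mul_mul_comm,
      Int.units_mul_self, one_mul, mul_comm]
  rcases Int.units_eq_one_or ((P.append D).sign σ) with h | h
  · rw [h, one_mul] at hprod
    exact ⟨T.reverse, hcycle _ hT.reverse hTC, hprod, hTC⟩
  · exact ⟨D, hcycle _ hD hDC, h, hDC⟩

end Walk

namespace Subgraph

lemma le_deleteVerts {H K : G.Subgraph} {s : Set V} (hle : K ≤ H) (hs : Disjoint K.verts s) :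
    K ≤ H.deleteVerts s :=
  ⟨fun _ ha => ⟨hle.1 ha, hs.notMem_of_mem_left ha⟩, fun _ _ hab => deleteVerts_adj.mpr
    ⟨hle.1 hab.fst_mem, hs.notMem_of_mem_left hab.fst_mem, hle.1 hab.snd_mem,
      hs.notMem_of_mem_left hab.snd_mem, hle.2 hab⟩⟩

lemma Connected.exists_isPath_to_set {H : G.Subgraph} (hH : H.Connected) {y z : V}
    (hy : y ∈ H.verts) (hz : z ∈ H.verts) {S : Set V} (hzS : z ∈ S) :
    ∃ b ∈ S, ∃ R : G.Walk y b, R.IsPath ∧ R.toSubgraph ≤ H ∧ ∀ v ∈ R.support, v ∈ S → v = b := by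
  classical
  obtain ⟨W, hW⟩ := ((connected_iff_forall_exists_walk_subgraph _).mp hH).2 hy hz
  obtain ⟨b, hb, R, R', hRR', hR⟩ := W.bypass.exists_append_eq_forall_mem_eq hzS
  have hsub : R.IsSubwalk W.bypass := ⟨Walk.nil, R', by simp [hRR']⟩
  exact ⟨b, hb, R, Walk.isPath_of_isSubwalk hsub W.bypass_isPath,
    hsub.toSubgraph_le.trans (W.toSubgraph_bypass_le_toSubgraph.trans hW), hR⟩

end Subgraph

lemma Walk.IsCycle.noCutVertex_toSubgraph {u : V} {w : G.Walk u u} (hw : w.IsCycle) :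
    NoCutVertex G w.toSubgraph := by
  classical
  intro v hv _
  have hvw : v ∈ w.support := w.mem_verts_toSubgraph.mp hv
  rw [← w.toSubgraph_rotate hvw]
  set c := w.rotate v hvw
  have hc : c.IsCycle := hw.rotate hvw
  -- Once the cycle starts at `v`, deleting `v` leaves the path `c.tail.dropLast`.
  have htail : ¬ c.tail.Nil := by
    rw [Walk.not_nil_iff_lt_length, Walk.length_tail]
    have := hc.three_le_length
    omega
  set q := c.tail.dropLast
  have hsupp : q.support ++ [v] = c.tail.support := Walk.support_dropLast_concat htail
  have hvq : v ∉ q.support := by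
    have := hc.isPath_tail.support_nodup
    rw [← hsupp, List.nodup_append] at this
    exact fun h => this.2.2 v h v (List.mem_singleton_self v) rfl
  refine q.toSubgraph_connected.mono (Subgraph.le_deleteVerts
    (Walk.isSubwalk_rfl c).tail.dropLast.toSubgraph_le
    (Set.disjoint_singleton_right.mpr (mt q.mem_verts_toSubgraph.mp hvq))) ?_
  ext a
  simp only [Walk.mem_verts_toSubgraph, Subgraph.deleteVerts_verts, Set.mem_sdiff,
    Set.mem_singleton_iff]
  rw [← Walk.cons_support_tail hc.not_nil, ← hsupp]
  grind

end SimpleGraph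

section Blocks

variable {G : SimpleGraph V}

lemma IsChain.exists_mem_verts_of_mem_sSup {c : Set G.Subgraph}
    (hc : IsChain (· ≤ ·) c) {a b : V} (ha : a ∈ (sSup c).verts) (hb : b ∈ (sSup c).verts) :
    ∃ B ∈ c, a ∈ B.verts ∧ b ∈ B.verts := by
  rw [Subgraph.verts_sSup, Set.mem_iUnion₂] at ha hb
  obtain ⟨B₁, h₁, ha⟩ := ha
  obtain ⟨B₂, h₂, hb⟩ := hb
  rcases hc.total h₁ h₂ with hle | hle
  · exact ⟨B₂, h₂, hle.1 ha, hb⟩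
  · exact ⟨B₁, h₁, ha, hle.1 hb⟩

lemma IsChain.connected_sSup {c : Set G.Subgraph} (hc : IsChain (· ≤ ·) c) (hne : c.Nonempty)
    (h : ∀ B ∈ c, B.Connected) : (sSup c).Connected := by
  rw [Subgraph.connected_iff_forall_exists_walk_subgraph]
  obtain ⟨B, hB⟩ := hne
  refine ⟨(h B hB).nonempty.mono (le_sSup hB).1, fun ha hb => ?_⟩
  obtain ⟨B', hB', ha', hb'⟩ := hc.exists_mem_verts_of_mem_sSup ha hb
  obtain ⟨W, hW⟩ :=
    ((Subgraph.connected_iff_forall_exists_walk_subgraph _).mp (h B' hB')).2 ha' hb'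
  exact ⟨W, hW.trans (le_sSup hB')⟩

namespace NoCutVertex

variable {B : G.Subgraph}

lemma exists_walk_le_deleteVerts (hB : NoCutVertex G B) (hconn : B.Connected) {v a b : V}
    (ha : a ∈ B.verts) (hb : b ∈ B.verts) (hav : a ≠ v) (hbv : b ≠ v) :
    ∃ W : G.Walk a b, W.toSubgraph ≤ B.deleteVerts {v} := by
  by_cases hv : v ∈ B.verts
  · have ha' : a ∈ (B.deleteVerts {v}).verts := ⟨ha, hav⟩
    exact ((Subgraph.connected_iff_forall_exists_walk_subgraph _).mp
      (hB v hv ⟨a, ha'⟩)).2 ha' ⟨hb, hbv⟩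
  · obtain ⟨W, hW⟩ := ((Subgraph.connected_iff_forall_exists_walk_subgraph _).mp hconn).2 ha hb
    exact ⟨W, Subgraph.le_deleteVerts hW
      (Set.disjoint_singleton_right.mpr fun hvW => hv (hW.1 hvW))⟩

variable (σ : Sym2 V → ℤˣ)

lemma exists_negCycle_mem_edges (hB : NoCutVertex G B) {x y : V}
    {C : G.Walk x x} (hC : C.IsCycle) (hCB : C.toSubgraph ≤ B) (hneg : C.sign σ = -1)
    (hxy : B.Adj x y) :
    ∃ D : G.Walk x x, D.IsCycle ∧ D.toSubgraph ≤ B ∧ D.sign σ = -1 ∧ s(x, y) ∈ D.edges := by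
  by_cases hxyC : s(x, y) ∈ C.edges
  · exact ⟨C, hC, hCB, hneg, hxyC⟩
  have hy : y ∈ (B.deleteVerts {x}).verts := ⟨hxy.snd_mem, hxy.ne.symm⟩
  have hsnd : C.snd ∈ (B.deleteVerts {x}).verts :=
    ⟨hCB.1 (C.mem_verts_toSubgraph.mpr (C.getVert_mem_support 1)),
      (C.adj_snd hC.not_nil).ne.symm⟩
  obtain ⟨b, hbC, R, hR, hRB, hRC⟩ := (hB x hxy.fst_mem ⟨y, hy⟩).exists_isPath_to_set hy hsnd
    (S := {v | v ∈ C.support}) (C.getVert_mem_support 1)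
  have hxR : x ∉ R.support := fun h => (hRB.1 (R.mem_verts_toSubgraph.mpr h)).2 rfl
  obtain ⟨Q, hcyc, hsign, hQC⟩ := hC.exists_sign_append_eq_neg_one σ hneg hbC
    (P := .cons hxy.adj_sub R) ((Walk.cons_isPath_iff _ _).mpr ⟨hR, hxR⟩) (by simpa using hRC)
    fun h => hxyC (h (by simp))
  refine ⟨_, hcyc, ?_, hsign, by simp⟩
  rw [Walk.toSubgraph_append, Walk.toSubgraph]
  exact sup_le (sup_le (subgraphOfAdj_le_of_adj B hxy) (hRB.trans B.deleteVerts_le))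
    (hQC.trans hCB)

lemma exists_negCycle_of_walk (hB : NoCutVertex G B) {u : V} {C : G.Walk u u}
    (hC : C.IsCycle) (hCB : C.toSubgraph ≤ B) (hneg : C.sign σ = -1) {x c : V}
    (p : G.Walk x c) (hp : p.toSubgraph ≤ B) (hc : c ∈ C.support) :
    ∃ D : G.Walk x x, D.IsCycle ∧ D.toSubgraph ≤ B ∧ D.sign σ = -1 := by
  classical
  induction p with
  | nil =>
    exact ⟨C.rotate _ hc, hC.rotate hc, by rwa [Walk.toSubgraph_rotate],
      by rwa [Walk.sign_rotate]⟩
  | @cons x z c h q ih =>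
    rw [Walk.toSubgraph] at hp
    obtain ⟨D, hD, hDB, hDneg⟩ := ih (le_sup_right.trans hp) hc
    have hzx : B.Adj z x := ((le_sup_left.trans hp).2 (by simp)).symm
    obtain ⟨D', hD', hD'B, hD'neg, hzxD'⟩ := hB.exists_negCycle_mem_edges σ hD hDB hDneg hzx
    have hxD' : x ∈ D'.support := D'.snd_mem_support_of_mem_edges hzxD'
    exact ⟨D'.rotate x hxD', hD'.rotate hxD', by rwa [Walk.toSubgraph_rotate],
      by rwa [Walk.sign_rotate]⟩

lemma exists_negCycle_mem_edges_of_connected (hB : NoCutVertex G B) (hconn : B.Connected)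
    {u : V} {C : G.Walk u u} (hC : C.IsCycle) (hCB : C.toSubgraph ≤ B) (hneg : C.sign σ = -1)
    {x y : V} (hxy : B.Adj x y) :
    ∃ D : G.Walk x x, D.IsCycle ∧ D.toSubgraph ≤ B ∧ D.sign σ = -1 ∧ s(x, y) ∈ D.edges := by
  obtain ⟨p, hp⟩ := ((Subgraph.connected_iff_forall_exists_walk_subgraph _).mp hconn).2
    hxy.fst_mem (hCB.1 C.start_mem_verts_toSubgraph)
  obtain ⟨D, hD, hDB, hDneg⟩ := hB.exists_negCycle_of_walk σ hC hCB hneg p hp C.start_mem_support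
  exact hB.exists_negCycle_mem_edges σ hD hDB hDneg hxy

end NoCutVertex

lemma IsChain.noCutVertex_sSup {c : Set G.Subgraph} (hc : IsChain (· ≤ ·) c)
    (h : ∀ B ∈ c, B.Connected ∧ NoCutVertex G B) : NoCutVertex G (sSup c) := by
  intro v _ hne
  rw [Subgraph.connected_iff_forall_exists_walk_subgraph]
  refine ⟨hne, fun ha hb => ?_⟩
  obtain ⟨B, hB, ha', hb'⟩ := hc.exists_mem_verts_of_mem_sSup ha.1 hb.1
  obtain ⟨W, hW⟩ := (h B hB).2.exists_walk_le_deleteVerts (h B hB).1 ha' hb' ha.2 hb.2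
  exact ⟨W, hW.trans (Subgraph.deleteVerts_mono (le_sSup hB))⟩

lemma exists_isBlock_le {H : G.Subgraph} (hconn : H.Connected) (hH : NoCutVertex G H) :
    ∃ B, IsBlock G B ∧ H ≤ B := by
  obtain ⟨B, hHB, hmax⟩ := zorn_le_nonempty₀ {B : G.Subgraph | B.Connected ∧ NoCutVertex G B}
    (fun c hcS hc B hB => ⟨sSup c, ⟨hc.connected_sSup ⟨B, hB⟩ fun B' hB' => (hcS hB').1,
      hc.noCutVertex_sSup fun B' hB' => hcS hB'⟩, fun _ => le_sSup⟩) H ⟨hconn, hH⟩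
  exact ⟨B, ⟨hmax.1.1, hmax.1.2, fun B' h₁ h₂ hle => hmax.eq_of_ge ⟨h₁, h₂⟩ hle⟩, hHB⟩

end Blocks

theorem stmt_2_general (G : SimpleGraph V) (σ : Sym2 V → ℤˣ) (e : Sym2 V) :
    (∃ (u : V) (w : G.Walk u u), w.IsCycle ∧ e ∈ w.edges ∧ (w.edges.map σ).prod = -1) ↔
    (∃ B : G.Subgraph, IsBlock G B ∧ UnbalancedSub G σ B ∧ e ∈ B.edgeSet) := by
  constructor
  · rintro ⟨u, w, hw, hew, hneg⟩
    obtain ⟨B, hB, hwB⟩ := exists_isBlock_le w.toSubgraph_connected hw.noCutVertex_toSubgraph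
    have hwB' : ∀ f ∈ w.edges, f ∈ B.edgeSet := fun f hf =>
      Subgraph.edgeSet_mono hwB (w.mem_edges_toSubgraph.mpr hf)
    exact ⟨B, hB, ⟨u, w, hw, hwB', hneg⟩, hwB' e hew⟩
  · rintro ⟨B, ⟨hconn, hB, -⟩, ⟨u, C, hC, hCB, hneg⟩, heB⟩
    induction e using Sym2.ind with
    | _ x y =>
      obtain ⟨D, hD, -, hDneg, hxyD⟩ := hB.exists_negCycle_mem_edges_of_connected σ hconn hC
        ((Walk.toSubgraph_le_iff hC.not_nil).mpr hCB) hneg heB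
      exact ⟨x, D, hD, hxyD, hDneg⟩

/-- An edge belongs to a negative cycle iff it lies in an unbalanced block. -/
theorem stmt_2 (G : SimpleGraph V) (σ : Sym2 V → ℤˣ) (e : Sym2 V) (he : e ∈ G.edgeSet) :
    (∃ (u : V) (w : G.Walk u u), w.IsCycle ∧ e ∈ w.edges ∧ (w.edges.map σ).prod = -1) ↔
    (∃ B : G.Subgraph, IsBlock G B ∧ UnbalancedSub G σ B ∧ e ∈ B.edgeSet) :=
  stmt_2_general G σ e
end

section
/- A signed graph Σ is balanced if and only if there is a function θ : V(Σ) → {+1, −1} such that for every edge uv, σ(uv) = θ(u)·θ(v). (Harary's balance theorem.) -/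
/-!
Call the product of the edge signs along a walk its sign. If `σ(uv) = θ(u)θ(v)`, the interior
factors cancel in pairs, so a walk from `a` to `b` has sign `θ(a)θ(b)`, which is `1` on closed
walks. Conversely, if every cycle is positive then so is every closed walk: `Walk.bypass` shortens
a walk to a path by repeatedly cutting off a closed subwalk `u → v ⇝ u` whose return part is a
path, and such a subwalk is either a cycle or one edge traversed back and forth, so each cut
preserves the sign. Hence walks with the same ends have the same sign, and taking for `θ(v)` the
sign of a fixed walk from a base point of the component of `v` to `v` gives `σ(uv) = θ(u)θ(v)`.
-/

open SimpleGraph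
variable {V : Type*}

namespace SimpleGraph.Walk

variable {G : SimpleGraph V} {M : Type*} [CommMonoid M] {u v w : V}

def edgeProd (f : Sym2 V → M) (p : G.Walk u v) : M :=
  (p.edges.map f).prod

variable (f : Sym2 V → M)

@[simp]
theorem edgeProd_nil : (nil : G.Walk u u).edgeProd f = 1 := rfl

@[simp]
theorem edgeProd_cons (h : G.Adj u v) (p : G.Walk v w) :
    (cons h p).edgeProd f = f s(u, v) * p.edgeProd f := by
  simp [edgeProd]

@[simp]
theorem edgeProd_append (p : G.Walk u v) (q : G.Walk v w) :
    (p.append q).edgeProd f = p.edgeProd f * q.edgeProd f := by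
  simp [edgeProd]

@[simp]
theorem edgeProd_concat (p : G.Walk u v) (h : G.Adj v w) :
    (p.concat h).edgeProd f = p.edgeProd f * f s(v, w) := by
  simp [concat]

@[simp]
theorem edgeProd_reverse (p : G.Walk u v) : p.reverse.edgeProd f = p.edgeProd f := by
  simp [edgeProd]

@[simp]
theorem edgeProd_copy {u' v' : V} (p : G.Walk u v) (hu : u = u') (hv : v = v') :
    (p.copy hu hv).edgeProd f = p.edgeProd f := by
  subst hu hv
  rfl

variable {σ : Sym2 V → ℤˣ}

theorem edgeProd_cons_eq_one_of_isPath (hb : SBalanced G σ) (h : G.Adj u v) {q : G.Walk v u}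
    (hq : q.IsPath) : (cons h q).edgeProd σ = 1 := by
  by_cases he : s(u, v) ∈ q.edges
  · cases q with
    | nil => simp at he
    | @cons _ y _ h' q =>
      obtain ⟨hq', hv⟩ := (cons_isPath_iff h' q).mp hq
      rcases List.mem_cons.mp he with he | he
      · obtain rfl : u = y := by
          rcases Sym2.eq_iff.mp he with ⟨rfl, -⟩ | ⟨rfl, -⟩
          · exact absurd rfl h.ne
          · rfl
        obtain rfl := (isPath_iff_nil.mp hq').eq_nil
        simp [Sym2.eq_swap]
      · exact absurd (q.snd_mem_support_of_mem_edges he) hv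
  · exact hb u _ ((cons_isCycle_iff q h).mpr ⟨hq, he⟩)

theorem edgeProd_bypass [DecidableEq V] (hb : SBalanced G σ) (p : G.Walk u v) :
    p.bypass.edgeProd σ = p.edgeProd σ := by
  induction p with
  | nil => rfl
  | @cons u w v h p ih =>
    rw [bypass]
    split_ifs with hu
    · have hsplit := congrArg (edgeProd σ) (p.bypass.take_spec hu)
      rw [edgeProd_append] at hsplit
      rw [edgeProd_cons, ← ih, ← hsplit, ← mul_assoc, ← edgeProd_cons σ h,
        edgeProd_cons_eq_one_of_isPath hb h ((bypass_isPath p).takeUntil hu), one_mul]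
    · rw [edgeProd_cons, edgeProd_cons, ih]

theorem edgeProd_eq_mul {θ : V → ℤˣ} (hθ : ∀ u v, G.Adj u v → σ s(u, v) = θ u * θ v)
    (p : G.Walk u v) : p.edgeProd σ = θ u * θ v := by
  induction p with
  | nil => simp
  | @cons u w v h p ih =>
    rw [edgeProd_cons, ih, hθ u w h, mul_assoc, ← mul_assoc (θ w), Int.units_mul_self, one_mul]

end SimpleGraph.Walk

namespace SBalanced

variable {G : SimpleGraph V} {σ : Sym2 V → ℤˣ}

theorem edgeProd_eq_one (hb : SBalanced G σ) {u : V} (w : G.Walk u u) : w.edgeProd σ = 1 := by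
  classical
  rw [← Walk.edgeProd_bypass hb, (Walk.isPath_iff_nil.mp w.bypass_isPath).eq_nil, Walk.edgeProd_nil]

theorem edgeProd_eq (hb : SBalanced G σ) {u v : V} (p q : G.Walk u v) :
    p.edgeProd σ = q.edgeProd σ := by
  have h := hb.edgeProd_eq_one (p.append q.reverse)
  rwa [Walk.edgeProd_append, Walk.edgeProd_reverse, mul_eq_one_iff_eq_inv,
    Int.units_inv_eq_self] at h

theorem exists_eq_mul (hb : SBalanced G σ) :
    ∃ θ : V → ℤˣ, ∀ u v : V, G.Adj u v → σ s(u, v) = θ u * θ v := by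
  have hreach (v : V) : G.Reachable (G.connectedComponentMk v).out v :=
    ConnectedComponent.exact (G.connectedComponentMk v).out_eq
  refine ⟨fun v => (hreach v).some.edgeProd σ, fun u v h => ?_⟩
  have hbase : (G.connectedComponentMk u).out = (G.connectedComponentMk v).out :=
    congrArg _ (ConnectedComponent.sound h.reachable)
  have h_eq := hb.edgeProd_eq (((hreach u).some.concat h).copy hbase rfl) (hreach v).some
  rw [Walk.edgeProd_copy, Walk.edgeProd_concat] at h_eq
  simp only [← h_eq, ← mul_assoc, Int.units_mul_self, one_mul]

end SBalanced

theorem sBalanced_of_eq_mul {G : SimpleGraph V} {σ : Sym2 V → ℤˣ} {θ : V → ℤˣ}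
    (hθ : ∀ u v : V, G.Adj u v → σ s(u, v) = θ u * θ v) : SBalanced G σ :=
  fun _ w _ => (Walk.edgeProd_eq_mul hθ w).trans (Int.units_mul_self _)

/-- Harary'"'"'s balance theorem: a signed graph is balanced iff there is a vertex
sign function `θ` with `σ(uv) = θ(u)·θ(v)` for every edge `uv`. -/
theorem stmt_9 (G : SimpleGraph V) (σ : Sym2 V → ℤˣ) :
    SBalanced G σ ↔ ∃ θ : V → ℤˣ, ∀ u v : V, G.Adj u v → σ s(u, v) = θ u * θ v :=
  ⟨SBalanced.exists_eq_mul, fun ⟨_, hθ⟩ => sBalanced_of_eq_mul hθ⟩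
end
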